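/- Let Γ be a countable index set, L : Γ → ℝ with L γ ≥ ℓ₀ for some ℓ₀ > 0, and suppose there exist C₁ > 0 and h ≥ 0 such that for every ℓ > 0 the set {γ ∈ Γ : L γ ≤ ℓ} is finite with cardinality at most C₁ · e^{h·ℓ}. Let Λ : Γ → ℝ with Λ γ > 1 for all γ, and suppose there exist C₂ > 0 and β > 0 with (Λ γ)⁻¹ ≤ C₂ · e^{-β·L γ} for all γ. Let w : Γ → ℂ satisfy |w γ| ≤ A · L γ for some A > 0. Then for every λ ∈ ℂ with Re λ > h - (3/2)·β the doubly indexed family ((n, γ) ∈ ℕ_{≥1} × Γ ↦ e^{-λ·L γ} · (Λ γ)^{-1/2-n} · w γ) is absolutely summable. -/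

import Mathlib

open Complex Filter Topology

/-!
Split `Λ^{-1/2-n} = Λ^{-3/2} · (Λ⁻¹)^{n-1}`. Since `Λ⁻¹ ≤ C₂ e^{-β L} → 0` along the cofinite
filter and `Λ⁻¹ < 1` everywhere, there is a uniform `q < 1` with `Λ⁻¹ ≤ q`, so the sum over `n`
is dominated by a geometric series. What remains is `∑_γ L_γ e^{-(Re λ + 3β/2) L_γ}`, a Dirichlet
series which converges beyond the exponential growth rate `h` of the counting function: group the
`γ` according to `⌊L_γ⌋`.
-/

section

variable {ι : Type*}

lemma exists_mem_Ico_forall_le_of_eventually_le {α : Type*} [LinearOrder α] {f : ι → α}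
    {r b : α} (hr : r < b) (hf : ∀ i, f i < b) (hev : ∀ᶠ i in cofinite, f i ≤ r) :
    ∃ q ∈ Set.Ico r b, ∀ i, f i ≤ q := by
  rcases Set.eq_empty_or_nonempty {i | ¬f i ≤ r} with hempty | hne
  · exact ⟨r, ⟨le_rfl, hr⟩, fun i => not_not.1 fun hi => hempty.subset hi⟩
  · obtain ⟨j, -, hj⟩ := Set.exists_max_image _ f (eventually_cofinite.1 hev) hne
    refine ⟨max r (f j), ⟨le_max_left _ _, max_lt hr (hf j)⟩, fun i => ?_⟩
    by_cases hi : f i ≤ r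
    · exact le_max_of_le_left hi
    · exact le_max_of_le_right (hj i hi)

lemma tendsto_cofinite_atTop_of_finite_sublevel {L : ι → ℝ}
    (hfin : ∀ ℓ : ℝ, 0 < ℓ → {i | L i ≤ ℓ}.Finite) : Tendsto L cofinite atTop := by
  refine (northcott_iff_tendsto L).1 ⟨fun ℓ => ?_⟩
  exact (hfin (max ℓ 1) (by positivity)).subset fun i (hi : L i ≤ ℓ) => hi.trans (le_max_left _ _)

lemma summable_exp_neg_mul_of_card_sublevel_le {L : ι → ℝ} (hL : ∀ i, 0 ≤ L i)
    {C h c : ℝ} (hcount : ∀ ℓ : ℝ, 0 < ℓ → {i | L i ≤ ℓ}.Finite ∧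
      (Nat.card {i | L i ≤ ℓ} : ℝ) ≤ C * Real.exp (h * ℓ))
    (hc : h < c) (hc0 : 0 ≤ c) :
    Summable fun i => Real.exp (-c * L i) := by
  set band : ℕ → Set ι := fun k => {i | ⌊L i⌋₊ = k}
  have hband_sub (k : ℕ) : band k ⊆ {i | L i ≤ k + 1} := fun i (hi : ⌊L i⌋₊ = k) =>
    hi ▸ (Nat.lt_floor_add_one (L i)).le
  have hfin (k : ℕ) : (band k).Finite := ((hcount (k + 1) (by positivity)).1).subset (hband_sub k)
  have hbound (k : ℕ) : ∑' i : band k, Real.exp (-c * L i) ≤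
      C * Real.exp h * Real.exp (h - c) ^ k := by
    have : Finite (band k) := hfin k
    have hterm (i : band k) : Real.exp (-c * L i) ≤ Real.exp (-c * k) := by
      have : (k : ℝ) ≤ L i := (congrArg Nat.cast i.2).symm.le.trans (Nat.floor_le (hL i))
      exact Real.exp_le_exp.2 (by nlinarith)
    have hcard : (Nat.card (band k) : ℝ) ≤ C * Real.exp (h * (k + 1)) :=
      (Nat.cast_le.2 (Nat.card_mono (hcount (k + 1) (by positivity)).1 (hband_sub k))).trans
        (hcount (k + 1) (by positivity)).2
    calc ∑' i : band k, Real.exp (-c * L i)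
        ≤ ∑' _ : band k, Real.exp (-c * k) :=
          Summable.tsum_le_tsum hterm Summable.of_finite Summable.of_finite
      _ = Nat.card (band k) * Real.exp (-c * k) := by rw [tsum_const, nsmul_eq_mul]
      _ ≤ C * Real.exp (h * (k + 1)) * Real.exp (-c * k) :=
          mul_le_mul_of_nonneg_right hcard (Real.exp_pos _).le
      _ = C * Real.exp h * Real.exp (h - c) ^ k := by
          rw [← Real.exp_nat_mul, mul_assoc, mul_assoc, ← Real.exp_add, ← Real.exp_add]
          ring_nf
  have hgeo : Summable fun k : ℕ => C * Real.exp h * Real.exp (h - c) ^ k :=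
    (summable_geometric_of_lt_one (Real.exp_pos _).le
      (Real.exp_lt_one_iff.2 (by linarith))).mul_left _
  refine (summable_partition (fun i => (Real.exp_pos _).le)
    (s := band) fun i => ⟨⌊L i⌋₊, rfl, fun _ hk => hk.symm⟩).2
    ⟨fun k => have : Finite (band k) := hfin k; Summable.of_finite, ?_⟩
  exact hgeo.of_nonneg_of_le (fun k => tsum_nonneg fun _ => (Real.exp_pos _).le) hbound

lemma sub_mul_mul_exp_neg_mul_le (a b x : ℝ) :
    (a - b) * (x * Real.exp (-a * x)) ≤ Real.exp (-b * x) := by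
  have hlin : (a - b) * x ≤ Real.exp ((a - b) * x) :=
    (le_add_of_nonneg_right zero_le_one).trans (Real.add_one_le_exp _)
  calc (a - b) * (x * Real.exp (-a * x)) = (a - b) * x * Real.exp (-a * x) := by ring
    _ ≤ Real.exp ((a - b) * x) * Real.exp (-a * x) :=
        mul_le_mul_of_nonneg_right hlin (Real.exp_pos _).le
    _ = Real.exp (-b * x) := by rw [← Real.exp_add]; ring_nf

lemma summable_mul_exp_neg_mul_of_card_sublevel_le {L : ι → ℝ} (hL : ∀ i, 0 ≤ L i)
    {C h c : ℝ} (hcount : ∀ ℓ : ℝ, 0 < ℓ → {i | L i ≤ ℓ}.Finite ∧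
      (Nat.card {i | L i ≤ ℓ} : ℝ) ≤ C * Real.exp (h * ℓ))
    (hc : h < c) (hh : 0 ≤ h) :
    Summable fun i => L i * Real.exp (-c * L i) := by
  have hsum := summable_exp_neg_mul_of_card_sublevel_le hL hcount (c := (h + c) / 2)
    (by linarith) (by linarith)
  refine (hsum.mul_left (c - (h + c) / 2)⁻¹).of_nonneg_of_le
    (fun i => mul_nonneg (hL i) (Real.exp_pos _).le) fun i => ?_
  rw [← div_eq_inv_mul, le_div_iff₀' (by linarith)]
  exact sub_mul_mul_exp_neg_mul_le _ _ _

lemma rpow_neg_half_sub_natCast {x : ℝ} (hx : 0 < x) {n : ℕ} (hn : 1 ≤ n) :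
    x ^ (-(1 / 2 : ℝ) - n) = x⁻¹ ^ (3 / 2 : ℝ) * x⁻¹ ^ (n - 1) := by
  rw [Real.inv_rpow hx.le, ← Real.rpow_neg hx.le, inv_pow, ← Real.rpow_natCast x (n - 1),
    ← Real.rpow_neg hx.le, ← Real.rpow_add hx]
  push_cast [Nat.cast_sub hn]
  ring_nf

lemma norm_exp_mul_rpow_mul {x ℓ : ℝ} (hx : 0 < x) {n : ℕ} (hn : 1 ≤ n) (lam w : ℂ) :
    ‖Complex.exp (-lam * (ℓ : ℂ)) * ((x ^ (-(1 / 2 : ℝ) - (n : ℝ)) : ℝ) : ℂ) * w‖ =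
      x⁻¹ ^ (n - 1) * (‖w‖ * Real.exp (-lam.re * ℓ) * x⁻¹ ^ (3 / 2 : ℝ)) := by
  rw [norm_mul, norm_mul, Complex.norm_exp, Complex.norm_real, Real.norm_eq_abs,
    abs_of_pos (Real.rpow_pos_of_pos hx _), rpow_neg_half_sub_natCast hx hn]
  simp only [neg_mul, neg_re, mul_re, ofReal_re, ofReal_im, mul_zero, sub_zero]
  ring

lemma inv_rpow_le_of_inv_le_mul_exp {x C β ℓ p : ℝ} (hx : 0 < x) (hp : 0 ≤ p)
    (hxC : x⁻¹ ≤ C * Real.exp (-β * ℓ)) :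
    x⁻¹ ^ p ≤ C ^ p * Real.exp (-(p * β) * ℓ) := by
  have hC : 0 ≤ C := nonneg_of_mul_nonneg_left ((inv_pos.2 hx).le.trans hxC) (Real.exp_pos _)
  calc x⁻¹ ^ p ≤ (C * Real.exp (-β * ℓ)) ^ p := Real.rpow_le_rpow (inv_pos.2 hx).le hxC hp
    _ = C ^ p * Real.exp (-(p * β) * ℓ) := by
        rw [Real.mul_rpow hC (Real.exp_pos _).le, ← Real.exp_mul]
        ring_nf

lemma exists_inv_le_of_inv_le_mul_exp {L Λ : ι → ℝ}
    (hL : Tendsto L cofinite atTop) (hΛ : ∀ i, 1 < Λ i) {C β : ℝ} (hβ : 0 < β)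
    (hhyp : ∀ i, (Λ i)⁻¹ ≤ C * Real.exp (-β * L i)) :
    ∃ q ∈ Set.Ico (1 / 2 : ℝ) 1, ∀ i, (Λ i)⁻¹ ≤ q := by
  have hdecay : Tendsto (fun ℓ => C * Real.exp (-β * ℓ)) atTop (𝓝 0) := by
    simpa [neg_mul] using (Real.tendsto_exp_neg_atTop_nhds_zero.comp
      (tendsto_id.const_mul_atTop hβ)).const_mul C
  refine exists_mem_Ico_forall_le_of_eventually_le (by norm_num)
    (fun i => inv_lt_one_of_one_lt₀ (hΛ i)) ?_
  exact (hL.eventually (hdecay.eventually (ge_mem_nhds (by norm_num)))).mono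
    fun i hi => (hhyp i).trans hi

lemma summable_norm_mul_exp_mul_inv_rpow {L Λ : ι → ℝ} {w : ι → ℂ}
    (hL : ∀ i, 0 ≤ L i) {C₁ h : ℝ} (hh : 0 ≤ h) (hcount : ∀ ℓ : ℝ, 0 < ℓ →
      {i | L i ≤ ℓ}.Finite ∧ (Nat.card {i | L i ≤ ℓ} : ℝ) ≤ C₁ * Real.exp (h * ℓ))
    (hΛ : ∀ i, 0 < Λ i) {C₂ β : ℝ} (hhyp : ∀ i, (Λ i)⁻¹ ≤ C₂ * Real.exp (-β * L i))
    {A : ℝ} (hw : ∀ i, ‖w i‖ ≤ A * L i) {a : ℝ} (ha : h < a + 3 / 2 * β) :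
    Summable fun i => ‖w i‖ * Real.exp (-a * L i) * (Λ i)⁻¹ ^ (3 / 2 : ℝ) := by
  refine ((summable_mul_exp_neg_mul_of_card_sublevel_le hL hcount ha hh).mul_left
    (A * C₂ ^ (3 / 2 : ℝ))).of_nonneg_of_le
    (fun i => mul_nonneg (by positivity) (Real.rpow_nonneg (inv_pos.2 (hΛ i)).le _)) fun i => ?_
  calc ‖w i‖ * Real.exp (-a * L i) * (Λ i)⁻¹ ^ (3 / 2 : ℝ)
      ≤ A * L i * Real.exp (-a * L i) * (C₂ ^ (3 / 2 : ℝ) * Real.exp (-(3 / 2 * β) * L i)) :=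
        mul_le_mul (mul_le_mul_of_nonneg_right (hw i) (Real.exp_pos _).le)
          (inv_rpow_le_of_inv_le_mul_exp (hΛ i) (by norm_num) (hhyp i))
          (Real.rpow_nonneg (inv_pos.2 (hΛ i)).le _)
          (mul_nonneg ((norm_nonneg _).trans (hw i)) (Real.exp_pos _).le)
    _ = _ := by rw [mul_assoc (A * L i), mul_left_comm _ (C₂ ^ _), ← Real.exp_add]; ring_nf
end

theorem sc_zeta_tail_summable_general
    (Γ : Type*) (L : Γ → ℝ) (Λ : Γ → ℝ) (w : Γ → ℂ)
    (ℓ₀ : ℝ) (hℓ₀ : 0 < ℓ₀) (hL : ∀ γ, ℓ₀ ≤ L γ)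
    (C₁ h : ℝ) (hh : 0 ≤ h)
    (hcount : ∀ ℓ : ℝ, 0 < ℓ → {γ : Γ | L γ ≤ ℓ}.Finite ∧
      (Nat.card {γ : Γ | L γ ≤ ℓ} : ℝ) ≤ C₁ * Real.exp (h * ℓ))
    (hΛ : ∀ γ, 1 < Λ γ)
    (C₂ β : ℝ) (hβ : 0 < β)
    (hhyp : ∀ γ, (Λ γ)⁻¹ ≤ C₂ * Real.exp (-β * L γ))
    (A : ℝ) (hw : ∀ γ, ‖w γ‖ ≤ A * L γ) :
    ∀ lam : ℂ, h - (3 / 2) * β < lam.re →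
      Summable (fun p : {n : ℕ // 1 ≤ n} × Γ =>
        ‖Complex.exp (-lam * (L p.2 : ℂ)) *
          ((Λ p.2 ^ (-(1 / 2 : ℝ) - (p.1.1 : ℝ)) : ℝ) : ℂ) * w p.2‖) := by
  intro lam hlam
  have hΛpos (γ : Γ) : 0 < Λ γ := one_pos.trans (hΛ γ)
  obtain ⟨q, ⟨hq_half, hq_one⟩, hq⟩ := exists_inv_le_of_inv_le_mul_exp
    (tendsto_cofinite_atTop_of_finite_sublevel fun ℓ hℓ => (hcount ℓ hℓ).1) hΛ hβ hhyp
  have hq0 : 0 ≤ q := hq_half.trans' (by norm_num)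
  set g : Γ → ℝ := fun γ => ‖w γ‖ * Real.exp (-lam.re * L γ) * (Λ γ)⁻¹ ^ (3 / 2 : ℝ)
  have hg0 (γ : Γ) : 0 ≤ g γ :=
    mul_nonneg (by positivity) (Real.rpow_nonneg (inv_pos.2 (hΛpos γ)).le _)
  have hg : Summable g := summable_norm_mul_exp_mul_inv_rpow (fun γ => hℓ₀.le.trans (hL γ)) hh
    hcount hΛpos hhyp hw (by linarith)
  have hgeo : Summable fun m : {n : ℕ // 1 ≤ n} => q ^ (m.1 - 1) :=
    (summable_geometric_of_lt_one hq0 hq_one).comp_injective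
      fun a b hab => Subtype.ext (by have := a.2; have := b.2; omega)
  refine (hgeo.mul_of_nonneg hg (fun _ => pow_nonneg hq0 _) hg0).of_nonneg_of_le
    (fun _ => norm_nonneg _) fun ⟨⟨n, hn⟩, γ⟩ => ?_
  rw [norm_exp_mul_rpow_mul (hΛpos γ) hn]
  exact mul_le_mul_of_nonneg_right (pow_le_pow_left₀ (inv_pos.2 (hΛpos γ)).le (hq γ) _) (hg0 γ)

/-- The tail `∑_{n≥1} ∑_γ e^{-λ L_γ} Λ_γ^{-1/2-n} w_γ` of the expanded
semiclassical weighted zeta function is absolutely summable for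
`Re λ > h - (3/2)β`. -/
theorem sc_zeta_tail_summable
    (Γ : Type*) [Countable Γ] (L : Γ → ℝ) (Λ : Γ → ℝ) (w : Γ → ℂ)
    (ℓ₀ : ℝ) (hℓ₀ : 0 < ℓ₀) (hL : ∀ γ, ℓ₀ ≤ L γ)
    (C₁ h : ℝ) (hC₁ : 0 < C₁) (hh : 0 ≤ h)
    (hcount : ∀ ℓ : ℝ, 0 < ℓ → {γ : Γ | L γ ≤ ℓ}.Finite ∧
      (Nat.card {γ : Γ | L γ ≤ ℓ} : ℝ) ≤ C₁ * Real.exp (h * ℓ))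
    (hΛ : ∀ γ, 1 < Λ γ)
    (C₂ β : ℝ) (hC₂ : 0 < C₂) (hβ : 0 < β)
    (hhyp : ∀ γ, (Λ γ)⁻¹ ≤ C₂ * Real.exp (-β * L γ))
    (A : ℝ) (hA : 0 < A) (hw : ∀ γ, ‖w γ‖ ≤ A * L γ) :
    ∀ lam : ℂ, h - (3 / 2) * β < lam.re →
      Summable (fun p : {n : ℕ // 1 ≤ n} × Γ =>
        ‖Complex.exp (-lam * (L p.2 : ℂ)) *
          ((Λ p.2 ^ (-(1 / 2 : ℝ) - (p.1.1 : ℝ)) : ℝ) : ℂ) * w p.2‖) :=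
  sc_zeta_tail_summable_general Γ L Λ w ℓ₀ hℓ₀ hL C₁ h hh hcount hΛ C₂ β hβ hhyp A hw
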